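/- Let Γ = (V,E) be a reflexive locally-finite k-separable graph and let X be a k-fragment of Γ. Then ∇⁻(∇(X)) = X, where ∇(Y) = V \ Γ(Y) and ∇⁻(Y) = V \ Γ⁻(Y). -/

import Mathlib

open Set

/-- Image of a set under a relation (graph). -/
def RelImage {V : Type*} (Γ : V → V → Prop) (X : Set V) : Set V := {y | ∃ x ∈ X, Γ x y}

/-- Reverse relation. -/
def RelRev {V : Type*} (Γ : V → V → Prop) : V → V → Prop := fun x y => Γ y x

/-- Boundary ∂(X) = Γ(X) \ X. -/
def RelBoundary {V : Type*} (Γ : V → V → Prop) (X : Set V) : Set V := RelImage Γ X \ X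

/-- Exterior ∇(X) = V \ Γ(X). -/
def RelNabla {V : Type*} (Γ : V → V → Prop) (X : Set V) : Set V := (RelImage Γ X)ᶜ

def RelReflexive {V : Type*} (Γ : V → V → Prop) : Prop := ∀ x, Γ x x

def RelLocallyFinite {V : Type*} (Γ : V → V → Prop) : Prop :=
  ∀ x : V, (RelImage Γ {x}).Finite ∧ (RelImage (RelRev Γ) {x}).Finite

/-- The family S_k(Γ): finite X with |X| ≥ k and at least k vertices outside Γ(X). -/
def SkFam {V : Type*} (Γ : V → V → Prop) (k : ℕ) : Set (Set V) :=
  {X | X.Finite ∧ k ≤ X.ncard ∧ ∃ Y : Set V, Y.Finite ∧ Y.ncard = k ∧ Y ⊆ RelNabla Γ X}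

def RelSeparable {V : Type*} (Γ : V → V → Prop) (k : ℕ) : Prop := (SkFam Γ k).Nonempty

/-- The k-isoperimetric connectivity κ_k(Γ). -/
noncomputable def relKappa {V : Type*} (Γ : V → V → Prop) (k : ℕ) : ℕ :=
  sInf ((fun X => (RelBoundary Γ X).ncard) '' SkFam Γ k)

def IsKFragment {V : Type*} (Γ : V → V → Prop) (k : ℕ) (X : Set V) : Prop :=
  X ∈ SkFam Γ k ∧ (RelBoundary Γ X).ncard = relKappa Γ k

def IsKAtom {V : Type*} (Γ : V → V → Prop) (k : ℕ) (X : Set V) : Prop :=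
  IsKFragment Γ k X ∧ ∀ Y, IsKFragment Γ k Y → X.ncard ≤ Y.ncard

/-- Γ is k-faithful: every k-atom A satisfies |A| ≤ |V \ Γ(A)|. -/
def KFaithful {V : Type*} (Γ : V → V → Prop) (k : ℕ) : Prop :=
  ∀ A, IsKAtom Γ k A → (RelNabla Γ A).Infinite ∨ A.ncard ≤ (RelNabla Γ A).ncard

/-!
A vertex `z` lies in `∇⁻(∇(X))` exactly when `Γ(z) ⊆ Γ(X)`. For such a `z` outside `X`, the set
`X ∪ {z}` is still in `S_k` with the same image, and by reflexivity `z` belongs to the finite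
boundary of `X`; so `X ∪ {z}` has boundary `∂(X) \ {z}`, one vertex smaller than `κ_k`, which is
impossible for a fragment.
-/

section

variable {V : Type*} (Γ : V → V → Prop)

lemma relImage_mono {X Y : Set V} (h : X ⊆ Y) : RelImage Γ X ⊆ RelImage Γ Y :=
  fun _ ⟨x, hx, hxy⟩ => ⟨x, h hx, hxy⟩

lemma relImage_insert (z : V) (X : Set V) :
    RelImage Γ (insert z X) = RelImage Γ {z} ∪ RelImage Γ X := by
  ext y
  simp [RelImage]

lemma relImage_finite (hfin : ∀ x, (RelImage Γ {x}).Finite) {X : Set V} (hX : X.Finite) :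
    (RelImage Γ X).Finite := by
  have : RelImage Γ X ⊆ ⋃ x ∈ X, RelImage Γ {x} := fun y ⟨x, hx, hxy⟩ =>
    mem_biUnion hx ⟨x, rfl, hxy⟩
  exact (hX.biUnion fun x _ => hfin x).subset this

lemma mem_relNabla_relRev_relNabla_iff (X : Set V) (z : V) :
    z ∈ RelNabla (RelRev Γ) (RelNabla Γ X) ↔ RelImage Γ {z} ⊆ RelImage Γ X := by
  simp only [RelNabla, RelImage, RelRev, mem_compl_iff, mem_ofPred_eq, mem_singleton_iff,
    subset_def]
  constructor
  · rintro hz y ⟨_, rfl, hzy⟩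
    by_contra hy
    exact hz ⟨y, hy, hzy⟩
  · rintro hz ⟨y, hy, hzy⟩
    exact hy (hz y ⟨z, rfl, hzy⟩)

lemma subset_relNabla_relRev_relNabla (X : Set V) : X ⊆ RelNabla (RelRev Γ) (RelNabla Γ X) :=
  fun z hz =>
    (mem_relNabla_relRev_relNabla_iff Γ X z).2 (relImage_mono Γ (singleton_subset_iff.2 hz))

variable {Γ}

lemma relImage_insert_of_subset {X : Set V} {z : V} (h : RelImage Γ {z} ⊆ RelImage Γ X) :
    RelImage Γ (insert z X) = RelImage Γ X := by
  rw [relImage_insert, union_eq_right.2 h]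

lemma relBoundary_insert_of_subset {X : Set V} {z : V} (h : RelImage Γ {z} ⊆ RelImage Γ X) :
    RelBoundary Γ (insert z X) = RelBoundary Γ X \ {z} := by
  rw [RelBoundary, RelBoundary, relImage_insert_of_subset h, sdiff_sdiff, union_comm,
    ← insert_eq]

lemma insert_mem_skFam {k : ℕ} {X : Set V} {z : V} (hX : X ∈ SkFam Γ k)
    (h : RelImage Γ {z} ⊆ RelImage Γ X) : insert z X ∈ SkFam Γ k := by
  obtain ⟨hXfin, hXk, Y, hYfin, hYk, hYsub⟩ := hX
  refine ⟨hXfin.insert z, hXk.trans (ncard_le_ncard (subset_insert z X) (hXfin.insert z)),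
    Y, hYfin, hYk, ?_⟩
  rwa [RelNabla, relImage_insert_of_subset h]

lemma relKappa_le {k : ℕ} {X : Set V} (hX : X ∈ SkFam Γ k) :
    relKappa Γ k ≤ (RelBoundary Γ X).ncard :=
  Nat.sInf_le ⟨X, hX, rfl⟩

lemma IsKFragment.mem_of_relImage_subset (hrefl : RelReflexive Γ) (hlf : RelLocallyFinite Γ)
    {k : ℕ} {X : Set V} (hX : IsKFragment Γ k X) {z : V} (h : RelImage Γ {z} ⊆ RelImage Γ X) :
    z ∈ X := by
  obtain ⟨hXS, hXkappa⟩ := hX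
  by_contra hzX
  have hzB : z ∈ RelBoundary Γ X := ⟨h ⟨z, rfl, hrefl z⟩, hzX⟩
  have hBfin : (RelBoundary Γ X).Finite :=
    (relImage_finite Γ (fun x => (hlf x).1) hXS.1).subset sdiff_subset
  have hlt : (RelBoundary Γ (insert z X)).ncard < relKappa Γ k := by
    rw [relBoundary_insert_of_subset h, ← hXkappa]
    exact ncard_sdiff_singleton_lt_of_mem hzB hBfin
  exact (relKappa_le (insert_mem_skFam hXS h)).not_gt hlt

end

theorem stmt3_general {V : Type*} (Γ : V → V → Prop) (k : ℕ)
    (hrefl : RelReflexive Γ) (hlf : RelLocallyFinite Γ)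
    (X : Set V) (hX : IsKFragment Γ k X) :
    RelNabla (RelRev Γ) (RelNabla Γ X) = X :=
  Subset.antisymm
    (fun z hz => hX.mem_of_relImage_subset hrefl hlf
      ((mem_relNabla_relRev_relNabla_iff Γ X z).1 hz))
    (subset_relNabla_relRev_relNabla Γ X)

theorem stmt3 {V : Type*} (Γ : V → V → Prop) (k : ℕ)
    (hrefl : RelReflexive Γ) (hlf : RelLocallyFinite Γ) (hsep : RelSeparable Γ k)
    (X : Set V) (hX : IsKFragment Γ k X) :
    RelNabla (RelRev Γ) (RelNabla Γ X) = X :=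
  stmt3_general Γ k hrefl hlf X hX
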